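/- A positive linear map φ: M_n → M_m satisfies Tr[K* X⁺ K] ≥ Tr[φ*(K)* φ*(X)⁺ φ*(K)] for all (K,X) ∈ M_m × M_m⁺ with ker(X) ⊆ ker(K*) if and only if φ satisfies the Schwarz inequality φ(A*A) ≥ φ(A)* φ(A) for all A ∈ M_n. -/

import Mathlib

open Matrix ComplexOrder

/-- `B` is the Moore–Penrose pseudoinverse of `A`. -/
def IsMoorePenroseInv {m : Type*} [Fintype m]
    (A B : Matrix m m ℂ) : Prop :=
  A * B * A = A ∧ B * A * B = B ∧ (A * B)ᴴ = A * B ∧ (B * A)ᴴ = B * A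

/-!
Completing the square: if `X ≥ 0` and `ker X ⊆ ker Kᴴ`, then
`Re Tr (Kᴴ X⁺ K) ≥ 2 Re Tr (Kᴴ C) - Re Tr (Cᴴ X C)` for every `C`, with equality at `C = X⁺ K`.

If `φ` is Schwarz, take `C = φ(A)` with `A = φ*(X)⁺ φ*(K)`, the optimiser for the lower trace
`t = Tr (φ*(K)ᴴ φ*(X)⁺ φ*(K))`. Adjointness gives `Tr (Kᴴ C) = t`, and the Schwarz inequality for
`Aᴴ` gives `Tr (Cᴴ X C) ≤ Tr (X φ(A Aᴴ)) = Tr (Aᴴ φ*(X) A) = t`, so the upper trace is at least `t`.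

Conversely, for `X > 0` and `K = X φ(A)ᴴ` the upper trace is `Tr (X φ(A)ᴴ φ(A))`, while `C = Aᴴ`
bounds the lower trace below by `2 Tr (X φ(A)ᴴ φ(A)) - Tr (X φ(Aᴴ A))`. The tracial inequality thus
gives `Tr (X (φ(Aᴴ A) - φ(A)ᴴ φ(A))) ≥ 0` for all `X > 0`, which is the Schwarz inequality. The
kernel condition for `φ*(X)` holds because a strictly positive `X` dominates every `Y ≥ 0` up to a
scalar, so `φ*(X)` dominates every `φ*(Y)`.
-/

namespace IsMoorePenroseInv

variable {m p : Type*} [Fintype m] {A B : Matrix m m ℂ}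

theorem unique {C : Matrix m m ℂ} (hB : IsMoorePenroseInv A B) (hC : IsMoorePenroseInv A C) :
    B = C := by
  obtain ⟨hB₁, hB₂, hB₃, hB₄⟩ := hB
  obtain ⟨hC₁, hC₂, hC₃, hC₄⟩ := hC
  have hAB : A * B = A * C := by
    calc A * B = (A * C * (A * B))ᴴ := by rw [← Matrix.mul_assoc, hC₁, hB₃]
    _ = A * B * (A * C) := by rw [conjTranspose_mul, hB₃, hC₃]
    _ = A * C := by rw [← Matrix.mul_assoc, hB₁]
  have hBA : B * A = C * A := by
    calc B * A = (B * A * (C * A))ᴴ := by rw [Matrix.mul_assoc, ← Matrix.mul_assoc A, hC₁, hB₄]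
    _ = C * A * (B * A) := by rw [conjTranspose_mul, hB₄, hC₄]
    _ = C * A := by rw [Matrix.mul_assoc, ← Matrix.mul_assoc A, hB₁]
  calc B = B * A * B := hB₂.symm
  _ = C * A * C := by rw [hBA, Matrix.mul_assoc, hAB, ← Matrix.mul_assoc]
  _ = C := hC₂

theorem conjTranspose (h : IsMoorePenroseInv A B) : IsMoorePenroseInv Aᴴ Bᴴ := by
  obtain ⟨h₁, h₂, h₃, h₄⟩ := h
  refine ⟨?_, ?_, ?_, ?_⟩
  · rw [← conjTranspose_mul, ← conjTranspose_mul, ← Matrix.mul_assoc, h₁]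
  · rw [← conjTranspose_mul, ← conjTranspose_mul, ← Matrix.mul_assoc, h₂]
  · rw [← conjTranspose_mul, h₄, h₄]
  · rw [← conjTranspose_mul, h₃, h₃]

theorem isHermitian (hA : A.IsHermitian) (h : IsMoorePenroseInv A B) : B.IsHermitian := by
  have h' := h.conjTranspose
  rw [hA.eq] at h'
  exact h'.unique h

theorem mul_mul_eq_of_ker_le (h : IsMoorePenroseInv A B) {K : Matrix p m ℂ}
    (hK : LinearMap.ker A.mulVecLin ≤ LinearMap.ker K.mulVecLin) : K * B * A = K := by
  refine ext_iff_mulVec.mpr fun v => ?_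
  have hv : v - (B * A) *ᵥ v ∈ LinearMap.ker A.mulVecLin := by
    simp [mulVec_sub, mulVec_mulVec, ← Matrix.mul_assoc, h.1]
  simpa [mulVec_sub, mulVec_mulVec, Matrix.mul_assoc, sub_eq_zero, eq_comm] using hK hv

theorem _root_.Matrix.IsHermitian.isMoorePenroseInv_cfc_inv [DecidableEq m]
    (hA : A.IsHermitian) : IsMoorePenroseInv A (cfc (·⁻¹ : ℝ → ℝ) A) := by
  have hmul (f g : ℝ → ℝ) : cfc f A * cfc g A = cfc (fun x => f x * g x) A :=
    (cfc_mul f g A ((Set.toFinite _).continuousOn _) ((Set.toFinite _).continuousOn _)).symm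
  have herm (f : ℝ → ℝ) : (cfc f A)ᴴ = cfc f A := (cfc_predicate f A).star_eq
  set B := cfc (·⁻¹ : ℝ → ℝ) A
  have hA' : A = cfc id A := (cfc_id ℝ A hA.isSelfAdjoint).symm
  rw [hA']
  refine ⟨?_, ?_, ?_, ?_⟩
  · rw [hmul, hmul]
    exact cfc_congr fun x _ => mul_inv_mul_cancel x
  · rw [hmul, hmul]
    exact cfc_congr fun x _ => by simpa using mul_inv_mul_cancel x⁻¹
  · rw [hmul, herm]
  · rw [hmul, herm]

variable [Fintype p]

theorem two_mul_re_trace_sub_le (hA : A.PosSemidef) (h : IsMoorePenroseInv A B)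
    {K : Matrix m p ℂ} (hK : LinearMap.ker A.mulVecLin ≤ LinearMap.ker Kᴴ.mulVecLin)
    (C : Matrix m p ℂ) :
    2 * (Kᴴ * C).trace.re - (Cᴴ * A * C).trace.re ≤ (Kᴴ * B * K).trace.re := by
  have hB := (h.isHermitian hA.1).eq
  have h₁ : Kᴴ * B * A = Kᴴ := h.mul_mul_eq_of_ker_le hK
  have h₂ : A * B * K = K := by
    simpa [conjTranspose_mul, hA.1.eq, hB, Matrix.mul_assoc] using congrArg (·ᴴ) h₁
  have hexp : (B * K - C)ᴴ * A * (B * K - C)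
      = Kᴴ * B * A * (B * K) - Kᴴ * B * A * C - Cᴴ * (A * B * K) + Cᴴ * A * C := by
    simp only [conjTranspose_sub, conjTranspose_mul, hB, Matrix.sub_mul, Matrix.mul_sub,
      Matrix.mul_assoc]
    abel
  have hCK : Cᴴ * K = (Kᴴ * C)ᴴ := by rw [conjTranspose_mul, conjTranspose_conjTranspose]
  rw [h₁, h₂, ← Matrix.mul_assoc Kᴴ B K, hCK] at hexp
  have hpos := (hA.conjTranspose_mul_mul_same (B * K - C)).trace_nonneg
  rw [hexp, trace_add, trace_sub, trace_sub, trace_conjTranspose] at hpos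
  have := (Complex.nonneg_iff.mp hpos).1
  simp only [Complex.add_re, Complex.sub_re, Complex.star_def, Complex.conj_re] at this
  linarith

end IsMoorePenroseInv

namespace Matrix

variable {n : Type*} [Fintype n]

theorem PosSemidef.trace_mul_nonneg {A B : Matrix n n ℂ} (hA : A.PosSemidef)
    (hB : B.PosSemidef) : 0 ≤ (A * B).trace := by
  classical
  open scoped MatrixOrder in
  obtain ⟨C, rfl⟩ := CStarAlgebra.nonneg_iff_eq_star_mul_self.mp hB.nonneg
  rw [star_eq_conjTranspose, ← Matrix.mul_assoc, trace_mul_cycle]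
  exact (hA.mul_mul_conjTranspose_same C).trace_nonneg

theorem eq_of_forall_trace_conjTranspose_mul_eq {M N : Matrix n n ℂ}
    (h : ∀ B, (Mᴴ * B).trace = (Nᴴ * B).trace) : M = N := by
  rw [← sub_eq_zero, ← trace_conjTranspose_mul_self_eq_zero_iff, conjTranspose_sub, Matrix.sub_mul,
    trace_sub, h, sub_self]

theorem span_posSemidef [DecidableEq n] :
    Submodule.span ℂ {A : Matrix n n ℂ | A.PosSemidef} = ⊤ := by
  open scoped MatrixOrder Matrix.Norms.L2Operator in
  exact eq_top_mono (Submodule.span_mono fun A hA => nonneg_iff_posSemidef.mp hA.1)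
    CStarAlgebra.span_nonneg_inter_unitBall

theorem mem_span_posSemidef [DecidableEq n] (A : Matrix n n ℂ) :
    A ∈ Submodule.span ℂ {A : Matrix n n ℂ | A.PosSemidef} := by
  simp [span_posSemidef]

theorem PosDef.exists_posSemidef_smul_sub [DecidableEq n] {X : Matrix n n ℂ} (hX : X.PosDef)
    {Y : Matrix n n ℂ} (hY : Y.IsHermitian) : ∃ c : ℝ, (c • X - Y).PosSemidef := by
  open scoped MatrixOrder Matrix.Norms.L2Operator in
  cases subsingleton_or_nontrivial (Matrix n n ℂ)
  · exact ⟨0, Subsingleton.elim 0 ((0 : ℝ) • X - Y) ▸ PosSemidef.zero⟩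
  obtain ⟨r, hr, hrX⟩ := (CFC.exists_pos_algebraMap_le_iff hX.isHermitian.isSelfAdjoint).2
    fun x hx => (isStrictlyPositive_iff_posDef.mpr hX).spectrum_pos hx
  refine ⟨‖Y‖ / r, ?_⟩
  rw [← le_iff]
  calc Y ≤ algebraMap ℝ _ ‖Y‖ := hY.isSelfAdjoint.le_algebraMap_norm_self
  _ = (‖Y‖ / r) • algebraMap ℝ _ r := by
    rw [Algebra.algebraMap_eq_smul_one, Algebra.algebraMap_eq_smul_one, smul_smul,
      div_mul_cancel₀ _ hr.ne']
  _ ≤ (‖Y‖ / r) • X := smul_le_smul_of_nonneg_left hrX (by positivity)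

theorem IsHermitian.posSemidef_of_forall_posDef [DecidableEq n] {D : Matrix n n ℂ}
    (hD : D.IsHermitian) (h : ∀ X : Matrix n n ℂ, X.PosDef → 0 ≤ (X * D).trace.re) :
    D.PosSemidef := by
  refine posSemidef_iff_dotProduct_mulVec.mpr ⟨hD, fun v => ?_⟩
  set z := star v ⬝ᵥ D *ᵥ v
  have hε : ∀ ε : ℝ, 0 < ε → 0 ≤ z.re + ε * D.trace.re := by
    intro ε hε
    have := h _ (PosDef.posSemidef_add (posSemidef_vecMulVec_self_star v) (PosDef.one.smul hε))
    rwa [Matrix.add_mul, trace_add, trace_mul_comm, mul_vecMulVec, trace_vecMulVec,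
      dotProduct_comm, smul_mul, Matrix.one_mul, trace_smul, Complex.add_re, Complex.smul_re,
      smul_eq_mul] at this
  have hre : 0 ≤ z.re := by
    have hcont : Continuous fun ε : ℝ => z.re + ε * D.trace.re := by fun_prop
    exact ge_of_tendsto ((hcont.tendsto' 0 _ (by simp)).mono_left nhdsWithin_le_nhds)
      (eventually_nhdsWithin_of_forall (s := Set.Ioi 0) hε)
  exact Complex.nonneg_iff.mpr ⟨hre, (hD.im_star_dotProduct_mulVec_self v).symm⟩

end Matrix

section PositiveMap

variable {ι κ : Type*} [Fintype ι]

theorem LinearMap.map_conjTranspose_of_posSemidef [DecidableEq ι]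
    {φ : Matrix ι ι ℂ →ₗ[ℂ] Matrix κ κ ℂ} (hφ : ∀ X, X.PosSemidef → (φ X).PosSemidef)
    (A : Matrix ι ι ℂ) : φ Aᴴ = (φ A)ᴴ := by
  induction mem_span_posSemidef A using Submodule.span_induction with
  | mem A hA => rw [hA.1.eq, (hφ A hA).1.eq]
  | zero => simp
  | add A B _ _ hA hB => simp [hA, hB]
  | smul c A _ hA => simp [hA]

theorem mulVec_map_eq_zero_of_posSemidef_smul_sub
    {ψ : Matrix κ κ ℂ →ₗ[ℂ] Matrix ι ι ℂ} (hψ : ∀ X, X.PosSemidef → (ψ X).PosSemidef)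
    {X Y : Matrix κ κ ℂ} (hY : Y.PosSemidef) {c : ℝ}
    (hXY : (c • X - Y).PosSemidef) {u : ι → ℂ} (hu : ψ X *ᵥ u = 0) : ψ Y *ᵥ u = 0 := by
  have h₁ := (hψ Y hY).dotProduct_mulVec_nonneg u
  have h₂ := (hψ _ hXY).dotProduct_mulVec_nonneg u
  rw [map_sub, LinearMap.map_smul_of_tower, sub_mulVec, smul_mulVec, hu, smul_zero, zero_sub,
    dotProduct_neg, neg_nonneg] at h₂
  exact ((hψ Y hY).dotProduct_mulVec_zero_iff u).mp (le_antisymm h₂ h₁)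

theorem ker_map_le_ker_map_of_posDef [Fintype κ] [DecidableEq κ]
    {ψ : Matrix κ κ ℂ →ₗ[ℂ] Matrix ι ι ℂ} (hψ : ∀ X, X.PosSemidef → (ψ X).PosSemidef)
    {X : Matrix κ κ ℂ} (hX : X.PosDef) (Y : Matrix κ κ ℂ) :
    LinearMap.ker (ψ X).mulVecLin ≤ LinearMap.ker (ψ Y).mulVecLin := by
  intro u hu
  simp only [LinearMap.mem_ker, mulVecLin_apply] at hu ⊢
  induction mem_span_posSemidef Y using Submodule.span_induction with
  | mem Y hY =>
    obtain ⟨c, hc⟩ := hX.exists_posSemidef_smul_sub hY.1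
    exact mulVec_map_eq_zero_of_posSemidef_smul_sub hψ hY hc hu
  | zero => simp
  | add Y Z _ _ hY hZ => simp [add_mulVec, hY, hZ]
  | smul c Y _ hY => simp [smul_mulVec, hY]

end PositiveMap

section HilbertSchmidtAdjoint

variable {ι κ : Type*} [Fintype ι] [Fintype κ]

def IsHilbertSchmidtAdjoint (φ : Matrix ι ι ℂ →ₗ[ℂ] Matrix κ κ ℂ)
    (ψ : Matrix κ κ ℂ →ₗ[ℂ] Matrix ι ι ℂ) : Prop :=
  ∀ A B, (Aᴴ * φ B).trace = ((ψ A)ᴴ * B).trace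

namespace IsHilbertSchmidtAdjoint

variable [DecidableEq ι] {φ : Matrix ι ι ℂ →ₗ[ℂ] Matrix κ κ ℂ} {ψ : Matrix κ κ ℂ →ₗ[ℂ] Matrix ι ι ℂ}
  (hφ : ∀ X, X.PosSemidef → (φ X).PosSemidef) (hadj : IsHilbertSchmidtAdjoint φ ψ)
include hφ hadj

theorem map_conjTranspose (A : Matrix κ κ ℂ) : ψ Aᴴ = (ψ A)ᴴ := by
  refine eq_of_forall_trace_conjTranspose_mul_eq fun B => ?_
  calc ((ψ Aᴴ)ᴴ * B).trace = (A * φ B).trace := by rw [← hadj, conjTranspose_conjTranspose]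
  _ = star (Aᴴ * φ Bᴴ).trace := by
    rw [φ.map_conjTranspose_of_posSemidef hφ, ← conjTranspose_mul, trace_conjTranspose, star_star,
      trace_mul_comm]
  _ = ((ψ A)ᴴᴴ * B).trace := by
    rw [hadj, ← trace_conjTranspose, conjTranspose_mul, conjTranspose_conjTranspose, trace_mul_comm]

theorem posSemidef_map {X : Matrix κ κ ℂ} (hX : X.PosSemidef) : (ψ X).PosSemidef := by
  have hψX : (ψ X).IsHermitian := by
    rw [IsHermitian, ← hadj.map_conjTranspose hφ, hX.1.eq]
  refine posSemidef_iff_dotProduct_mulVec.mpr ⟨hψX, fun v => ?_⟩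
  rw [dotProduct_comm, ← trace_vecMulVec, ← mul_vecMulVec, ← hψX.eq, ← hadj, hX.1.eq]
  exact hX.trace_mul_nonneg (hφ _ (posSemidef_vecMulVec_self_star v))

theorem re_trace_pinv_le_of_schwarz
    (hS : ∀ A, (φ (Aᴴ * A) - (φ A)ᴴ * φ A).PosSemidef) {K X Xp : Matrix κ κ ℂ}
    {P : Matrix ι ι ℂ} (hX : X.PosSemidef)
    (hK : LinearMap.ker X.mulVecLin ≤ LinearMap.ker Kᴴ.mulVecLin)
    (hXp : IsMoorePenroseInv X Xp) (hP : IsMoorePenroseInv (ψ X) P) :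
    ((ψ K)ᴴ * P * ψ K).trace.re ≤ (Kᴴ * Xp * K).trace.re := by
  have hψX : (ψ X)ᴴ = ψ X := by rw [← hadj.map_conjTranspose hφ, hX.1.eq]
  have hP' := (hP.isHermitian hψX).eq
  set A := P * ψ K
  set B := φ A
  have hKB : (Kᴴ * B).trace = ((ψ K)ᴴ * P * ψ K).trace := by rw [hadj, Matrix.mul_assoc]
  have hXA : (X * φ (A * Aᴴ)).trace = ((ψ K)ᴴ * P * ψ K).trace := by
    calc (X * φ (A * Aᴴ)).trace = (ψ X * (A * Aᴴ)).trace := by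
          simpa only [hX.1.eq, hψX] using hadj X (A * Aᴴ)
    _ = (Aᴴ * ψ X * A).trace := by rw [trace_mul_cycle', Matrix.mul_assoc]
    _ = ((ψ K)ᴴ * (P * ψ X * P) * ψ K).trace := by
          simp only [A, conjTranspose_mul, hP', Matrix.mul_assoc]
    _ = ((ψ K)ᴴ * P * ψ K).trace := by rw [hP.2.1]
  have hBB : (X * (B * Bᴴ)).trace.re ≤ (X * φ (A * Aᴴ)).trace.re := by
    have hSA := hS Aᴴ
    rw [conjTranspose_conjTranspose, φ.map_conjTranspose_of_posSemidef hφ,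
      conjTranspose_conjTranspose] at hSA
    have := (Complex.nonneg_iff.mp (hX.trace_mul_nonneg hSA)).1
    rwa [Matrix.mul_sub, trace_sub, Complex.sub_re, sub_nonneg] at this
  have hBXB : (Bᴴ * X * B).trace = (X * (B * Bᴴ)).trace := by
    rw [trace_mul_cycle, trace_mul_comm]
  have hvar := hXp.two_mul_re_trace_sub_le hX hK B
  rw [hBXB, hKB] at hvar
  rw [hXA] at hBB
  linarith

theorem re_trace_mul_map_le_of_tracial
    (hT : ∀ (K X Xp : Matrix κ κ ℂ) (P : Matrix ι ι ℂ), X.PosSemidef →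
      LinearMap.ker X.mulVecLin ≤ LinearMap.ker Kᴴ.mulVecLin →
      IsMoorePenroseInv X Xp → IsMoorePenroseInv (ψ X) P →
      ((ψ K)ᴴ * P * ψ K).trace.re ≤ (Kᴴ * Xp * K).trace.re)
    [DecidableEq κ] (A : Matrix ι ι ℂ) {X : Matrix κ κ ℂ} (hX : X.PosDef) :
    (X * ((φ A)ᴴ * φ A)).trace.re ≤ (X * φ (Aᴴ * A)).trace.re := by
  have hψX := hadj.posSemidef_map hφ hX.posSemidef
  set K := X * (φ A)ᴴ
  have hKh : Kᴴ = φ A * X := by rw [conjTranspose_mul, hX.1.eq, conjTranspose_conjTranspose]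
  have hK : LinearMap.ker X.mulVecLin ≤ LinearMap.ker Kᴴ.mulVecLin := fun u hu => by
    simp only [LinearMap.mem_ker, mulVecLin_apply] at hu ⊢
    rw [hKh, ← mulVec_mulVec, hu, mulVec_zero]
  have hψK : LinearMap.ker (ψ X).mulVecLin ≤ LinearMap.ker (ψ K)ᴴ.mulVecLin := by
    rw [← hadj.map_conjTranspose hφ]
    exact ker_map_le_ker_map_of_posDef (fun Y hY => hadj.posSemidef_map hφ hY) hX _
  obtain ⟨Xp, hXp⟩ : ∃ Xp, IsMoorePenroseInv X Xp := ⟨_, hX.1.isMoorePenroseInv_cfc_inv⟩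
  obtain ⟨P, hP⟩ : ∃ P, IsMoorePenroseInv (ψ X) P := ⟨_, hψX.1.isMoorePenroseInv_cfc_inv⟩
  have hmain := hT K X Xp P hX.posSemidef hK hXp hP
  have hvar := hP.two_mul_re_trace_sub_le hψX hψK Aᴴ
  have hRHS : (Kᴴ * Xp * K).trace = (X * ((φ A)ᴴ * φ A)).trace := by
    rw [hKh, show φ A * X * Xp * (X * (φ A)ᴴ) = φ A * (X * Xp * X) * (φ A)ᴴ by
      simp only [Matrix.mul_assoc], hXp.1, trace_mul_cycle, trace_mul_comm]
  have e₁ : ((ψ K)ᴴ * Aᴴ).trace = (X * ((φ A)ᴴ * φ A)).trace := by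
    rw [← hadj, φ.map_conjTranspose_of_posSemidef hφ, hKh, trace_mul_cycle, trace_mul_comm]
  have e₂ : (Aᴴᴴ * ψ X * Aᴴ).trace = (X * φ (Aᴴ * A)).trace := by
    rw [conjTranspose_conjTranspose, trace_mul_cycle, trace_mul_comm]
    simpa only [hX.1.eq, hψX.1.eq] using (hadj X (Aᴴ * A)).symm
  rw [hRHS] at hmain
  rw [e₁, e₂] at hvar
  linarith

theorem schwarz_of_tracial
    (hT : ∀ (K X Xp : Matrix κ κ ℂ) (P : Matrix ι ι ℂ), X.PosSemidef →
      LinearMap.ker X.mulVecLin ≤ LinearMap.ker Kᴴ.mulVecLin →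
      IsMoorePenroseInv X Xp → IsMoorePenroseInv (ψ X) P →
      ((ψ K)ᴴ * P * ψ K).trace.re ≤ (Kᴴ * Xp * K).trace.re)
    [DecidableEq κ] (A : Matrix ι ι ℂ) : (φ (Aᴴ * A) - (φ A)ᴴ * φ A).PosSemidef := by
  refine ((hφ _ (posSemidef_conjTranspose_mul_self A)).1.sub
    (posSemidef_conjTranspose_mul_self _).1).posSemidef_of_forall_posDef fun X hX => ?_
  rw [Matrix.mul_sub, trace_sub, Complex.sub_re, sub_nonneg]
  exact hadj.re_trace_mul_map_le_of_tracial hφ hT A hX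

end IsHilbertSchmidtAdjoint

end HilbertSchmidtAdjoint

/-- A positive map `φ` satisfies `Tr[Kᴴ X⁺ K] ≥ Tr[φ*(K)ᴴ φ*(X)⁺ φ*(K)]` whenever
`ker X ⊆ ker Kᴴ` iff `φ` satisfies the Schwarz inequality. -/
theorem tracial_ineq_iff_schwarz {n m : ℕ}
    (φ : Matrix (Fin n) (Fin n) ℂ →ₗ[ℂ] Matrix (Fin m) (Fin m) ℂ)
    (hφ : ∀ X : Matrix (Fin n) (Fin n) ℂ, X.PosSemidef → (φ X).PosSemidef)
    (ψ : Matrix (Fin m) (Fin m) ℂ →ₗ[ℂ] Matrix (Fin n) (Fin n) ℂ)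
    (hadj : ∀ (A : Matrix (Fin m) (Fin m) ℂ) (B : Matrix (Fin n) (Fin n) ℂ),
      (Aᴴ * φ B).trace = ((ψ A)ᴴ * B).trace) :
    (∀ (K X : Matrix (Fin m) (Fin m) ℂ)
        (Xp : Matrix (Fin m) (Fin m) ℂ) (ψXp : Matrix (Fin n) (Fin n) ℂ),
        X.PosSemidef →
        LinearMap.ker X.mulVecLin ≤ LinearMap.ker Kᴴ.mulVecLin →
        IsMoorePenroseInv X Xp → IsMoorePenroseInv (ψ X) ψXp →
        ((ψ K)ᴴ * ψXp * ψ K).trace.re ≤ (Kᴴ * Xp * K).trace.re) ↔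
      (∀ A : Matrix (Fin n) (Fin n) ℂ,
        (φ (Aᴴ * A) - (φ A)ᴴ * φ A).PosSemidef) :=
  ⟨fun hT => IsHilbertSchmidtAdjoint.schwarz_of_tracial hφ hadj hT,
    fun hS _ _ _ _ hX hK hXp hP =>
      IsHilbertSchmidtAdjoint.re_trace_pinv_le_of_schwarz hφ hadj hS hX hK hXp hP⟩
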